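/- Consider a jump-diffusion dX(t) = μ(t, X(t)) dt + σ(t, X(t)) dW(t) + dJ(t) with compound Poisson jumps of intensity λ and jump density f_η, with the parameter choices μ(t,x) = [Σ_k w_k β_k(t) f_k(t,x)] / [Σ_k w_k f_k(t,x)] and σ²(t,x) = [Σ_k w_k γ_k²(t) f_k(t,x)] / [Σ_k w_k f_k(t,x)], where f_k(t,·) is the density of the jump diffusion dX_k = β_k(t)dt + γ_k(t)dW + dJ with the same jump structure, and the weights w_k > 0 sum to 1. Then f(t,x) := Σ_k w_k f_k(t,x) satisfies the Fokker–Planck (forward Kolmogorov) equation of the SDE for X: ∂_t f = ½ ∂²_{xx}(σ²(t,x) f) − ∂_x(μ(t,x) f) − λ f + λ ∫ f_η(z) f(t, x−z) dz. -/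

import Mathlib

open MeasureTheory

/-- The mixture `f(t,x) = Σ_k w_k f_k(t,x)` of Fokker–Planck solutions of jump diffusions
with time-dependent coefficients `β_k, γ_k` satisfies the Fokker–Planck equation of the
local volatility jump diffusion with
`μ(t,x) = Σ w_k β_k f_k / Σ w_k f_k` and `σ²(t,x) = Σ w_k γ_k² f_k / Σ w_k f_k`:
`∂_t f = ½ ∂²_{xx}(σ² f) − ∂_x(μ f) − λ f + λ ∫ f_η(z) f(t, x−z) dz`. -/
theorem fokker_planck_mixture {ι : Type*} [Fintype ι]
    (w : ι → ℝ) (hw : ∀ k, 0 < w k) (hwsum : ∑ k, w k = 1)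
    (β γ : ι → ℝ → ℝ) (l : ℝ) (hl : 0 ≤ l) (fη : ℝ → ℝ)
    (f : ι → ℝ → ℝ → ℝ) (hpos : ∀ k t x, 0 < f k t x)
    (hsmooth : ∀ k, ContDiff ℝ (⊤ : ℕ∞) (Function.uncurry (f k)))
    (hint : ∀ k t x, Integrable fun z => fη z * f k t (x - z))
    (hFPk : ∀ k t x,
      deriv (fun s => f k s x) t
        = (1 / 2) * γ k t ^ 2 * deriv (fun y => deriv (fun y' => f k t y') y) x
          - β k t * deriv (fun y => f k t y) x
          - l * f k t x
          + l * ∫ z, fη z * f k t (x - z)) :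
    ∀ t x,
      deriv (fun s => ∑ k, w k * f k s x) t
        = (1 / 2) * deriv (fun y => deriv (fun y' =>
              ((∑ k, w k * γ k t ^ 2 * f k t y') / (∑ k, w k * f k t y'))
                * ∑ k, w k * f k t y') y) x
          - deriv (fun y =>
              ((∑ k, w k * β k t * f k t y) / (∑ k, w k * f k t y))
                * ∑ k, w k * f k t y) x
          - l * ∑ k, w k * f k t x
          + l * ∫ z, fη z * ∑ k, w k * f k t (x - z) := by
  intro t x
  have hι : Nonempty ι := by
    by_contra h
    rw [not_nonempty_iff] at h
    simp [Finset.univ_eq_empty] at hwsum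
  have hden : ∀ y, (0:ℝ) < ∑ k, w k * f k t y := fun y =>
    Finset.sum_pos (fun k _ => mul_pos (hw k) (hpos k t y)) Finset.univ_nonempty
  -- cancel the divisions
  have e1 : (fun y => ((∑ k, w k * γ k t ^ 2 * f k t y) / (∑ k, w k * f k t y))
      * ∑ k, w k * f k t y) = fun y => ∑ k, w k * γ k t ^ 2 * f k t y :=
    funext fun y => div_mul_cancel₀ _ (hden y).ne'
  have e2 : (fun y => ((∑ k, w k * β k t * f k t y) / (∑ k, w k * f k t y))
      * ∑ k, w k * f k t y) = fun y => ∑ k, w k * β k t * f k t y :=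
    funext fun y => div_mul_cancel₀ _ (hden y).ne'
  rw [e1, e2]
  -- smoothness in each variable
  have hCx : ∀ k, ContDiff ℝ (⊤ : ℕ∞) (fun y => f k t y) := fun k =>
    (hsmooth k).comp (contDiff_const.prodMk contDiff_id)
  have hCx' := fun k =>
    (contDiff_infty_iff_deriv.mp ((hCx k).of_le (by simp))).2
  have hCt : ∀ k, ContDiff ℝ (⊤ : ℕ∞) (fun s => f k s x) := fun k =>
    (hsmooth k).comp (contDiff_id.prodMk contDiff_const)
  -- time derivative of the mixture
  have hL : deriv (fun s => ∑ k, w k * f k s x) t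
      = ∑ k, w k * deriv (fun s => f k s x) t := by
    rw [deriv_fun_sum fun k _ => ((hCt k).differentiable (by simp) t).const_mul (w k)]
    exact Finset.sum_congr rfl fun k _ => deriv_const_mul _ ((hCt k).differentiable (by simp) t)
  -- first spatial derivative of the γ² sum, as a function
  have hg : (fun y => deriv (fun y' => ∑ k, w k * γ k t ^ 2 * f k t y') y)
      = fun y => ∑ k, w k * γ k t ^ 2 * deriv (fun y' => f k t y') y := by
    funext y
    rw [deriv_fun_sum fun k _ => ((hCx k).differentiable (by simp) y).const_mul (w k * γ k t ^ 2)]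
    exact Finset.sum_congr rfl fun k _ => deriv_const_mul _ ((hCx k).differentiable (by simp) y)
  have hG2 : deriv (fun y => deriv (fun y' => ∑ k, w k * γ k t ^ 2 * f k t y') y) x
      = ∑ k, w k * γ k t ^ 2 * deriv (fun y => deriv (fun y' => f k t y') y) x := by
    rw [hg, deriv_fun_sum fun k _ => ((hCx' k).differentiable (by simp) x).const_mul (w k * γ k t ^ 2)]
    exact Finset.sum_congr rfl fun k _ => deriv_const_mul _ ((hCx' k).differentiable (by simp) x)
  have hB1 : deriv (fun y => ∑ k, w k * β k t * f k t y) x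
      = ∑ k, w k * β k t * deriv (fun y => f k t y) x := by
    rw [deriv_fun_sum fun k _ => ((hCx k).differentiable (by simp) x).const_mul (w k * β k t)]
    exact Finset.sum_congr rfl fun k _ => deriv_const_mul _ ((hCx k).differentiable (by simp) x)
  -- integral of the mixture
  have hI : (∫ z, fη z * ∑ k, w k * f k t (x - z))
      = ∑ k, w k * ∫ z, fη z * f k t (x - z) := by
    have : (fun z => fη z * ∑ k, w k * f k t (x - z))
        = fun z => ∑ k, w k * (fη z * f k t (x - z)) := by
      funext z
      rw [Finset.mul_sum]
      exact Finset.sum_congr rfl fun k _ => by ring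
    rw [this, integral_finset_sum _ fun k _ => (hint k t x).const_mul (w k)]
    exact Finset.sum_congr rfl fun k _ => integral_const_mul _ _
  rw [hL, hG2, hB1, hI, Finset.mul_sum, Finset.mul_sum, Finset.mul_sum,
    ← Finset.sum_sub_distrib, ← Finset.sum_sub_distrib, ← Finset.sum_add_distrib]
  exact Finset.sum_congr rfl fun k _ => by rw [hFPk k t x]; ring
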